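/- Let N ≥ 1, p ≥ 1, let ξ, ξ̄ : Fin N → ℝ satisfy 0 ≤ ξ_i ≤ 1 and 0 ≤ ξ̄_i ≤ 1 for every i, and let y, ȳ : Fin p → ℝ be vectors every entry of which lies in {0,1}. Then ∑_i (1 − ⌈ξ̄_i⌉) ξ_i + ∑_l (ȳ_l (1 − y_l) + (1 − ȳ_l) y_l) > 0 if and only if it is NOT the case that (ξ_i ≤ ⌈ξ̄_i⌉ for every i and y = ȳ). -/
import Mathlib


/-- The strict no-good cut
∑_i (1 − ⌈ξ̄_i⌉) ξ_i + ∑_l (ȳ_l (1 − y_l) + (1 − ȳ_l) y_l) > 0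
excludes exactly the points satisfying the fixing constraints ξ ≤ ⌈ξ̄⌉
(componentwise) and y = ȳ. -/
theorem strict_cut_excludes_exactly_fixed_region
    (N p : ℕ) (hN : 1 ≤ N) (hp : 1 ≤ p)
    (ξ ξb : Fin N → ℝ)
    (hξ0 : ∀ i, 0 ≤ ξ i) (hξ1 : ∀ i, ξ i ≤ 1)
    (hξb0 : ∀ i, 0 ≤ ξb i) (hξb1 : ∀ i, ξb i ≤ 1)
    (y yb : Fin p → ℝ)
    (hy : ∀ l, y l = 0 ∨ y l = 1)
    (hyb : ∀ l, yb l = 0 ∨ yb l = 1) :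
    (0 < ∑ i, (1 - (⌈ξb i⌉ : ℝ)) * ξ i
          + ∑ l, (yb l * (1 - y l) + (1 - yb l) * y l)) ↔
      ¬ ((∀ i, ξ i ≤ (⌈ξb i⌉ : ℝ)) ∧ y = yb) := by
  have hceil : ∀ i, (⌈ξb i⌉ : ℝ) = 0 ∨ (⌈ξb i⌉ : ℝ) = 1 := by
    intro i
    have h0 : (0:ℤ) ≤ ⌈ξb i⌉ := Int.ceil_nonneg (hξb0 i)
    have h1 : ⌈ξb i⌉ ≤ 1 := Int.ceil_le.2 (by simpa using hξb1 i)
    have : ⌈ξb i⌉ = 0 ∨ ⌈ξb i⌉ = 1 := by omega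
    rcases this with h | h <;> simp [h]
  have hterm1 : ∀ i, 0 ≤ (1 - (⌈ξb i⌉ : ℝ)) * ξ i := by
    intro i
    rcases hceil i with h | h <;> simp [h, hξ0 i]
  have hterm2 : ∀ l, 0 ≤ yb l * (1 - y l) + (1 - yb l) * y l := by
    intro l
    rcases hy l with h | h <;> rcases hyb l with h' | h' <;> simp [h, h'] <;> norm_num
  have hsum1 : (0:ℝ) ≤ ∑ i, (1 - (⌈ξb i⌉ : ℝ)) * ξ i :=
    Finset.sum_nonneg fun i _ => hterm1 i
  have hsum2 : (0:ℝ) ≤ ∑ l, (yb l * (1 - y l) + (1 - yb l) * y l) :=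
    Finset.sum_nonneg fun l _ => hterm2 l
  constructor
  · intro hpos
    rintro ⟨hle, hyy⟩
    have h1 : ∑ i, (1 - (⌈ξb i⌉ : ℝ)) * ξ i = 0 := by
      apply Finset.sum_eq_zero
      intro i _
      rcases hceil i with h | h
      · have : ξ i ≤ 0 := h ▸ hle i
        have : ξ i = 0 := le_antisymm this (hξ0 i)
        simp [this]
      · simp [h]
    have h2 : ∑ l, (yb l * (1 - y l) + (1 - yb l) * y l) = 0 := by
      apply Finset.sum_eq_zero
      intro l _
      rw [hyy]
      rcases hyb l with h | h <;> simp [h]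
    rw [h1, h2] at hpos
    exact lt_irrefl 0 (by simpa using hpos)
  · intro hne
    rw [not_and_or] at hne
    rcases hne with h | h
    · push_neg at h
      obtain ⟨i, hi⟩ := h
      have hc : (⌈ξb i⌉ : ℝ) = 0 := by
        rcases hceil i with h' | h'
        · exact h'
        · exact absurd (h' ▸ hξ1 i) (not_le.2 hi)
      have hpos : 0 < (1 - (⌈ξb i⌉ : ℝ)) * ξ i := by
        rw [hc] at hi ⊢
        simpa using hi
      have : 0 < ∑ i, (1 - (⌈ξb i⌉ : ℝ)) * ξ i :=
        Finset.sum_pos' (fun j _ => hterm1 j) ⟨i, Finset.mem_univ i, hpos⟩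
      linarith
    · have : ∃ l, y l ≠ yb l := by
        by_contra hc
        push_neg at hc
        exact h (funext hc)
      obtain ⟨l, hl⟩ := this
      have hpos : 0 < yb l * (1 - y l) + (1 - yb l) * y l := by
        rcases hy l with h1 | h1 <;> rcases hyb l with h2 | h2 <;>
          simp [h1, h2] at hl ⊢ <;> norm_num
      have : 0 < ∑ l, (yb l * (1 - y l) + (1 - yb l) * y l) :=
        Finset.sum_pos' (fun j _ => hterm2 j) ⟨l, Finset.mem_univ l, hpos⟩
      linarith
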